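/- arXiv:1408.4953 — 6 statements merged into one kernel-verified Lean document; each statement's English description precedes it below -/
import Mathlib

section
/- In a skew monoidal category in which the associator α, left unitor λ, and right unitor ρ are all invertible, the axioms (g⊗1)⊗f → g⊗(1⊗f) → g⊗f equals ρ⁻¹ (axiom 2) and the pentagon axiom (axiom 1) together imply the remaining three axioms: λ_{g⊗f} ∘ α = λ_g ⊗ f; α ∘ ρ_{g⊗f} = g ⊗ ρ_f; and λ_I ∘ ρ_I = 1_I. -/
open CategoryTheory

universe w v u v' u'

/-- The data of a skew monoidal structure on a category: tensor product (on objects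
and morphisms), unit object, and (not necessarily invertible) associator, left unitor
and right unitor. -/
structure SkewMonoidalData (C : Type u) [Category.{v} C] where
  t : C → C → C
  tH : ∀ {X X' Y Y' : C}, (X ⟶ X') → (Y ⟶ Y') → (t X Y ⟶ t X' Y')
  I : C
  a : ∀ X Y Z : C, t (t X Y) Z ⟶ t X (t Y Z)
  l : ∀ X : C, t I X ⟶ X
  r : ∀ X : C, X ⟶ t X I

namespace SkewMonoidalData

variable {C : Type u} [Category.{v} C]

/-- The tensor product is functorial in each variable (a bifunctor). -/
class Functorial (S : SkewMonoidalData C) : Prop where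
  tH_id : ∀ X Y : C, S.tH (𝟙 X) (𝟙 Y) = 𝟙 (S.t X Y)
  tH_comp : ∀ {X X' X'' Y Y' Y'' : C} (f : X ⟶ X') (f' : X' ⟶ X'') (g : Y ⟶ Y')
    (g' : Y' ⟶ Y''), S.tH (f ≫ f') (g ≫ g') = S.tH f g ≫ S.tH f' g'

/-- The naturality conditions and five coherence axioms of a skew monoidal category. -/
structure IsSkewMonoidal (S : SkewMonoidalData C) : Prop where
  a_nat : ∀ {X X' Y Y' Z Z' : C} (f : X ⟶ X') (g : Y ⟶ Y') (h : Z ⟶ Z'),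
    S.tH (S.tH f g) h ≫ S.a X' Y' Z' = S.a X Y Z ≫ S.tH f (S.tH g h)
  l_nat : ∀ {X Y : C} (f : X ⟶ Y), S.tH (𝟙 S.I) f ≫ S.l Y = S.l X ≫ f
  r_nat : ∀ {X Y : C} (f : X ⟶ Y), f ≫ S.r Y = S.r X ≫ S.tH f (𝟙 S.I)
  pentagon : ∀ W X Y Z : C,
    S.tH (S.a W X Y) (𝟙 Z) ≫ S.a W (S.t X Y) Z ≫ S.tH (𝟙 W) (S.a X Y Z)
      = S.a (S.t W X) Y Z ≫ S.a W X (S.t Y Z)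
  ax2 : ∀ X Y : C, S.tH (S.r X) (𝟙 Y) ≫ S.a X S.I Y ≫ S.tH (𝟙 X) (S.l Y) = 𝟙 (S.t X Y)
  ax3 : ∀ X Y : C, S.a S.I X Y ≫ S.l (S.t X Y) = S.tH (S.l X) (𝟙 Y)
  ax4 : ∀ X Y : C, S.r (S.t X Y) ≫ S.a X Y S.I = S.tH (𝟙 X) (S.r Y)
  ax5 : S.r S.I ≫ S.l S.I = 𝟙 S.I

end SkewMonoidalData

open SkewMonoidalData in
theorem SkewMonoidalData.tH_isIso' {C : Type u} [Category.{v} C] (S : SkewMonoidalData C)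
    [S.Functorial] {X X' Y Y' : C} (f : X ⟶ X') (g : Y ⟶ Y') [IsIso f] [IsIso g] :
    IsIso (S.tH f g) :=
  ⟨S.tH (inv f) (inv g),
    by rw [← Functorial.tH_comp, IsIso.hom_inv_id, IsIso.hom_inv_id, Functorial.tH_id],
    by rw [← Functorial.tH_comp, IsIso.inv_hom_id, IsIso.inv_hom_id, Functorial.tH_id]⟩

open SkewMonoidalData in
/-- in a skew monoidal category in which `α`, `λ`, `ρ` are all invertible,
the pentagon axiom (axiom 1) and axiom 2 (together with naturality and functoriality)
imply the remaining three axioms. -/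
theorem skewMonoidal_invertible_redundant_axioms {C : Type u} [Category.{v} C]
    (S : SkewMonoidalData C) [S.Functorial]
    (a_nat : ∀ {X X' Y Y' Z Z' : C} (f : X ⟶ X') (g : Y ⟶ Y') (h : Z ⟶ Z'),
      S.tH (S.tH f g) h ≫ S.a X' Y' Z' = S.a X Y Z ≫ S.tH f (S.tH g h))
    (l_nat : ∀ {X Y : C} (f : X ⟶ Y), S.tH (𝟙 S.I) f ≫ S.l Y = S.l X ≫ f)
    (r_nat : ∀ {X Y : C} (f : X ⟶ Y), f ≫ S.r Y = S.r X ≫ S.tH f (𝟙 S.I))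
    (pentagon : ∀ W X Y Z : C,
      S.tH (S.a W X Y) (𝟙 Z) ≫ S.a W (S.t X Y) Z ≫ S.tH (𝟙 W) (S.a X Y Z)
        = S.a (S.t W X) Y Z ≫ S.a W X (S.t Y Z))
    (ax2 : ∀ X Y : C,
      S.tH (S.r X) (𝟙 Y) ≫ S.a X S.I Y ≫ S.tH (𝟙 X) (S.l Y) = 𝟙 (S.t X Y))
    (ia : ∀ X Y Z : C, IsIso (S.a X Y Z)) (il : ∀ X : C, IsIso (S.l X))
    (ir : ∀ X : C, IsIso (S.r X)) :
    (∀ X Y : C, S.a S.I X Y ≫ S.l (S.t X Y) = S.tH (S.l X) (𝟙 Y)) ∧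
    (∀ X Y : C, S.r (S.t X Y) ≫ S.a X Y S.I = S.tH (𝟙 X) (S.r Y)) ∧
    (S.r S.I ≫ S.l S.I = 𝟙 S.I) := by
  haveI := ia; haveI := il; haveI := ir
  have tH_id := Functorial.tH_id (S := S)
  have tH_comp : ∀ {X X' X'' Y Y' Y'' : C} (f : X ⟶ X') (f' : X' ⟶ X'') (g : Y ⟶ Y')
      (g' : Y' ⟶ Y''), S.tH (f ≫ f') (g ≫ g') = S.tH f g ≫ S.tH f' g' :=
    fun f f' g g' => Functorial.tH_comp f f' g g'
  have tH_comp_l : ∀ {W X Y Z : C} (f : X ⟶ Y) (g : Y ⟶ Z),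
      S.tH (𝟙 W) (f ≫ g) = S.tH (𝟙 W) f ≫ S.tH (𝟙 W) g := by
    intro W X Y Z f g
    have h := tH_comp (𝟙 W) (𝟙 W) f g
    rwa [Category.comp_id (𝟙 W)] at h
  have tH_comp_r : ∀ {W X Y Z : C} (f : X ⟶ Y) (g : Y ⟶ Z),
      S.tH (f ≫ g) (𝟙 W) = S.tH f (𝟙 W) ≫ S.tH g (𝟙 W) := by
    intro W X Y Z f g
    have h := tH_comp f g (𝟙 W) (𝟙 W)
    rwa [Category.comp_id (𝟙 W)] at h
  have cancelL : ∀ {X Y : C} (f g : X ⟶ Y), S.tH (𝟙 S.I) f = S.tH (𝟙 S.I) g → f = g := by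
    intro X Y f g h
    have h1 := l_nat f
    have h2 := l_nat g
    rw [h] at h1
    rw [h1] at h2
    exact (cancel_epi (S.l X)).1 h2
  have cancelR : ∀ {X Y : C} (f g : X ⟶ Y), S.tH f (𝟙 S.I) = S.tH g (𝟙 S.I) → f = g := by
    intro X Y f g h
    have h1 := r_nat f
    have h2 := r_nat g
    rw [h, ← h2] at h1
    exact (cancel_mono (S.r Y)).1 h1
  have tri' : ∀ X Y : C, S.a X S.I Y ≫ S.tH (𝟙 X) (S.l Y) = S.tH (inv (S.r X)) (𝟙 Y) := by
    intro X Y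
    have hinv : S.tH (inv (S.r X)) (𝟙 Y) ≫ S.tH (S.r X) (𝟙 Y) = 𝟙 _ := by
      rw [← tH_comp, IsIso.inv_hom_id, Category.comp_id, tH_id]
    calc S.a X S.I Y ≫ S.tH (𝟙 X) (S.l Y)
        = (S.tH (inv (S.r X)) (𝟙 Y) ≫ S.tH (S.r X) (𝟙 Y)) ≫
            (S.a X S.I Y ≫ S.tH (𝟙 X) (S.l Y)) := by rw [hinv, Category.id_comp]
      _ = S.tH (inv (S.r X)) (𝟙 Y) ≫
            (S.tH (S.r X) (𝟙 Y) ≫ S.a X S.I Y ≫ S.tH (𝟙 X) (S.l Y)) := by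
          simp only [Category.assoc]
      _ = S.tH (inv (S.r X)) (𝟙 Y) := by rw [ax2, Category.comp_id]
  have ax2' : ∀ X Y : C, S.tH (S.r X) (𝟙 Y) ≫ S.a X S.I Y = S.tH (𝟙 X) (inv (S.l Y)) := by
    intro X Y
    haveI : IsIso (S.tH (𝟙 X) (S.l Y)) := S.tH_isIso' _ _
    rw [← cancel_mono (S.tH (𝟙 X) (S.l Y)), Category.assoc, ax2, ← tH_comp,
      IsIso.inv_hom_id, Category.id_comp, tH_id]
  have hax3 : ∀ X Y : C, S.a S.I X Y ≫ S.l (S.t X Y) = S.tH (S.l X) (𝟙 Y) := by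
    intro X Y
    have key : ∀ W : C,
        S.tH (S.a W S.I X) (𝟙 Y) ≫ S.a W (S.t S.I X) Y ≫
          S.tH (𝟙 W) (S.a S.I X Y ≫ S.l (S.t X Y))
        = S.tH (S.a W S.I X) (𝟙 Y) ≫ S.a W (S.t S.I X) Y ≫
            S.tH (𝟙 W) (S.tH (S.l X) (𝟙 Y)) := by
      intro W
      have lhs : S.tH (S.a W S.I X) (𝟙 Y) ≫ S.a W (S.t S.I X) Y ≫
          S.tH (𝟙 W) (S.a S.I X Y ≫ S.l (S.t X Y))
          = S.tH (S.tH (inv (S.r W)) (𝟙 X)) (𝟙 Y) ≫ S.a W X Y := by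
        have hnat := a_nat (inv (S.r W)) (𝟙 X) (𝟙 Y)
        rw [tH_id] at hnat
        calc S.tH (S.a W S.I X) (𝟙 Y) ≫ S.a W (S.t S.I X) Y ≫
              S.tH (𝟙 W) (S.a S.I X Y ≫ S.l (S.t X Y))
            = (S.tH (S.a W S.I X) (𝟙 Y) ≫ S.a W (S.t S.I X) Y ≫
                S.tH (𝟙 W) (S.a S.I X Y)) ≫ S.tH (𝟙 W) (S.l (S.t X Y)) := by
              rw [tH_comp_l]; simp only [Category.assoc]
          _ = (S.a (S.t W S.I) X Y ≫ S.a W S.I (S.t X Y)) ≫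
                S.tH (𝟙 W) (S.l (S.t X Y)) := by rw [pentagon]
          _ = S.a (S.t W S.I) X Y ≫ S.tH (inv (S.r W)) (𝟙 (S.t X Y)) := by
              rw [Category.assoc, tri']
          _ = S.tH (S.tH (inv (S.r W)) (𝟙 X)) (𝟙 Y) ≫ S.a W X Y := hnat.symm
      have rhs : S.tH (S.a W S.I X) (𝟙 Y) ≫ S.a W (S.t S.I X) Y ≫
          S.tH (𝟙 W) (S.tH (S.l X) (𝟙 Y))
          = S.tH (S.tH (inv (S.r W)) (𝟙 X)) (𝟙 Y) ≫ S.a W X Y := by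
        have hnat := a_nat (𝟙 W) (S.l X) (𝟙 Y)
        calc S.tH (S.a W S.I X) (𝟙 Y) ≫ S.a W (S.t S.I X) Y ≫
              S.tH (𝟙 W) (S.tH (S.l X) (𝟙 Y))
            = S.tH (S.a W S.I X) (𝟙 Y) ≫ S.tH (S.tH (𝟙 W) (S.l X)) (𝟙 Y) ≫
                S.a W X Y := by rw [hnat]
          _ = S.tH (S.a W S.I X ≫ S.tH (𝟙 W) (S.l X)) (𝟙 Y) ≫ S.a W X Y := by
              rw [tH_comp_r]; simp only [Category.assoc]
          _ = S.tH (S.tH (inv (S.r W)) (𝟙 X)) (𝟙 Y) ≫ S.a W X Y := by rw [tri']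
      rw [lhs, rhs]
    have k := key S.I
    haveI : IsIso (S.tH (S.a S.I S.I X) (𝟙 Y)) := S.tH_isIso' _ _
    have k1 := (cancel_epi (S.tH (S.a S.I S.I X) (𝟙 Y))).1 k
    have k2 := (cancel_epi (S.a S.I (S.t S.I X) Y)).1 k1
    exact cancelL _ _ k2
  have hax4 : ∀ X Y : C, S.r (S.t X Y) ≫ S.a X Y S.I = S.tH (𝟙 X) (S.r Y) := by
    intro X Y
    have key : S.tH (S.r (S.t X Y) ≫ S.a X Y S.I) (𝟙 S.I) ≫ S.a X (S.t Y S.I) S.I ≫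
        S.tH (𝟙 X) (S.a Y S.I S.I)
        = S.tH (S.tH (𝟙 X) (S.r Y)) (𝟙 S.I) ≫ S.a X (S.t Y S.I) S.I ≫
            S.tH (𝟙 X) (S.a Y S.I S.I) := by
      have lhs : S.tH (S.r (S.t X Y) ≫ S.a X Y S.I) (𝟙 S.I) ≫ S.a X (S.t Y S.I) S.I ≫
          S.tH (𝟙 X) (S.a Y S.I S.I)
          = S.a X Y S.I ≫ S.tH (𝟙 X) (S.tH (𝟙 Y) (inv (S.l S.I))) := by
        have hnat := a_nat (𝟙 X) (𝟙 Y) (inv (S.l S.I))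
        rw [tH_id] at hnat
        calc S.tH (S.r (S.t X Y) ≫ S.a X Y S.I) (𝟙 S.I) ≫ S.a X (S.t Y S.I) S.I ≫
              S.tH (𝟙 X) (S.a Y S.I S.I)
            = S.tH (S.r (S.t X Y)) (𝟙 S.I) ≫ (S.tH (S.a X Y S.I) (𝟙 S.I) ≫
                S.a X (S.t Y S.I) S.I ≫ S.tH (𝟙 X) (S.a Y S.I S.I)) := by
              rw [tH_comp_r]; simp only [Category.assoc]
          _ = S.tH (S.r (S.t X Y)) (𝟙 S.I) ≫ S.a (S.t X Y) S.I S.I ≫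
                S.a X Y (S.t S.I S.I) := by rw [pentagon]
          _ = (S.tH (S.r (S.t X Y)) (𝟙 S.I) ≫ S.a (S.t X Y) S.I S.I) ≫
                S.a X Y (S.t S.I S.I) := by rw [Category.assoc]
          _ = S.tH (𝟙 (S.t X Y)) (inv (S.l S.I)) ≫ S.a X Y (S.t S.I S.I) := by
              rw [ax2']
          _ = S.a X Y S.I ≫ S.tH (𝟙 X) (S.tH (𝟙 Y) (inv (S.l S.I))) := hnat
      have rhs : S.tH (S.tH (𝟙 X) (S.r Y)) (𝟙 S.I) ≫ S.a X (S.t Y S.I) S.I ≫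
          S.tH (𝟙 X) (S.a Y S.I S.I)
          = S.a X Y S.I ≫ S.tH (𝟙 X) (S.tH (𝟙 Y) (inv (S.l S.I))) := by
        have hnat := a_nat (𝟙 X) (S.r Y) (𝟙 S.I)
        calc S.tH (S.tH (𝟙 X) (S.r Y)) (𝟙 S.I) ≫ S.a X (S.t Y S.I) S.I ≫
              S.tH (𝟙 X) (S.a Y S.I S.I)
            = (S.tH (S.tH (𝟙 X) (S.r Y)) (𝟙 S.I) ≫ S.a X (S.t Y S.I) S.I) ≫
                S.tH (𝟙 X) (S.a Y S.I S.I) := by rw [Category.assoc]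
          _ = (S.a X Y S.I ≫ S.tH (𝟙 X) (S.tH (S.r Y) (𝟙 S.I))) ≫
                S.tH (𝟙 X) (S.a Y S.I S.I) := by rw [hnat]
          _ = S.a X Y S.I ≫ S.tH (𝟙 X) (S.tH (S.r Y) (𝟙 S.I) ≫ S.a Y S.I S.I) := by
              rw [Category.assoc, tH_comp_l]
          _ = S.a X Y S.I ≫ S.tH (𝟙 X) (S.tH (𝟙 Y) (inv (S.l S.I))) := by rw [ax2']
      rw [lhs, rhs]
    rw [← Category.assoc, ← Category.assoc] at key
    haveI : IsIso (S.tH (𝟙 X) (S.a Y S.I S.I)) := S.tH_isIso' _ _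
    have k1 := (cancel_mono (S.tH (𝟙 X) (S.a Y S.I S.I))).1 key
    have k2 := (cancel_mono (S.a X (S.t Y S.I) S.I)).1 k1
    exact cancelR _ _ k2
  refine ⟨hax3, hax4, ?_⟩
  have hl : S.tH (𝟙 S.I) (S.l S.I) = S.l (S.t S.I S.I) := by
    rw [← cancel_mono (S.l S.I)]
    exact l_nat (S.l S.I)
  have h1 := hax3 S.I S.I
  have h2 := tri' S.I S.I
  rw [hl, h1] at h2
  have h3 := cancelR _ _ h2
  rw [h3, IsIso.hom_inv_id]
end

section
/- Given a skew warping (D, T, K, v, k, v₀) on a skew monoidal category C, the warped tensor product A ⊠ B = TA ⊗ B with unit K, associator T(Tg⊗f)⊗h → Tg⊗(Tf⊗h) built from v and α, left unitor TK⊗f → f built from v₀ and λ, and right unitor f → Tf⊗K built from k, defines a skew monoidal structure on C. -/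
open CategoryTheory

universe w v u v' u'

/-- The data of a skew warping on a skew monoidal category (the one-object case of a
skew warping on a skew bicategory): a functor `T`, an object `K`, and natural families
`v : T(Tg ⊗ f) ⟶ Tg ⊗ Tf`, `k : f ⟶ Tf ⊗ K`, `v₀ : TK ⟶ I`. -/
structure SkewWarpingData {C : Type u} [Category.{v} C] (S : SkewMonoidalData C) where
  T : C ⥤ C
  K : C
  v : ∀ g f : C, T.obj (S.t (T.obj g) f) ⟶ S.t (T.obj g) (T.obj f)
  k : ∀ f : C, f ⟶ S.t (T.obj f) K
  v0 : T.obj K ⟶ S.I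
  v_nat : ∀ {g g' f f' : C} (φ : g ⟶ g') (ψ : f ⟶ f'),
    T.map (S.tH (T.map φ) ψ) ≫ v g' f' = v g f ≫ S.tH (T.map φ) (T.map ψ)
  k_nat : ∀ {f f' : C} (ψ : f ⟶ f'), ψ ≫ k f' = k f ≫ S.tH (T.map ψ) (𝟙 K)

namespace SkewWarpingData

variable {C : Type u} [Category.{v} C] {S : SkewMonoidalData C}

/-- Warping axiom 1 (the pentagon-type axiom). -/
def wax1 (W : SkewWarpingData S) : Prop :=
  ∀ h g f : C,
    W.v (S.t (W.T.obj h) g) f ≫ S.tH (W.v h g) (𝟙 (W.T.obj f))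
        ≫ S.a (W.T.obj h) (W.T.obj g) (W.T.obj f)
      = W.T.map (S.tH (W.v h g) (𝟙 f)) ≫ W.T.map (S.a (W.T.obj h) (W.T.obj g) f)
        ≫ W.v h (S.t (W.T.obj g) f) ≫ S.tH (𝟙 (W.T.obj h)) (W.v g f)

/-- Warping axiom 2: `(1 ⊗ v₀) ∘ v ∘ T k = ρ`. -/
def wax2 (W : SkewWarpingData S) : Prop :=
  ∀ f : C, W.T.map (W.k f) ≫ W.v f W.K ≫ S.tH (𝟙 (W.T.obj f)) W.v0 = S.r (W.T.obj f)

/-- Warping axiom 3: `λ ∘ (v₀ ⊗ 1) ∘ v = T λ ∘ T (v₀ ⊗ 1)`. -/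
def wax3 (W : SkewWarpingData S) : Prop :=
  ∀ f : C,
    W.v W.K f ≫ S.tH W.v0 (𝟙 (W.T.obj f)) ≫ S.l (W.T.obj f)
      = W.T.map (S.tH W.v0 (𝟙 f)) ≫ W.T.map (S.l f)

/-- Warping axiom 4: `α ∘ (v ⊗ 1) ∘ k = 1 ⊗ k`. -/
def wax4 (W : SkewWarpingData S) : Prop :=
  ∀ g f : C,
    W.k (S.t (W.T.obj g) f) ≫ S.tH (W.v g f) (𝟙 W.K)
        ≫ S.a (W.T.obj g) (W.T.obj f) W.K
      = S.tH (𝟙 (W.T.obj g)) (W.k f)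

/-- Warping axiom 5: `λ ∘ (v₀ ⊗ 1) ∘ k = 1`. -/
def wax5 (W : SkewWarpingData S) : Prop :=
  W.k W.K ≫ S.tH W.v0 (𝟙 W.K) ≫ S.l W.K = 𝟙 W.K

/-- A skew warping: warping data satisfying the five axioms. -/
structure IsSkewWarping (W : SkewWarpingData S) : Prop where
  ax1 : W.wax1
  ax2 : W.wax2
  ax3 : W.wax3
  ax4 : W.wax4
  ax5 : W.wax5

end SkewWarpingData

/-- The warped tensor data: `A ⊠ B = T A ⊗ B`, unit `K`, associator built from `v` and
`α`, left unitor built from `v₀` and `λ`, right unitor given by `k`. -/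
def warped {C : Type u} [Category.{v} C] (S : SkewMonoidalData C)
    (W : SkewWarpingData S) : SkewMonoidalData C where
  t A B := S.t (W.T.obj A) B
  tH φ ψ := S.tH (W.T.map φ) ψ
  I := W.K
  a X Y Z := S.tH (W.v X Y) (𝟙 Z) ≫ S.a (W.T.obj X) (W.T.obj Y) Z
  l X := S.tH W.v0 (𝟙 X) ≫ S.l X
  r X := W.k X

/-- a skew warping on a skew monoidal category induces a skew monoidal
structure on `C` via the warped tensor product. -/
theorem warped_isSkewMonoidal {C : Type u} [Category.{v} C] (S : SkewMonoidalData C)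
    [S.Functorial] (hS : S.IsSkewMonoidal) (W : SkewWarpingData S)
    (hW : W.IsSkewWarping) :
    (warped S W).Functorial ∧ (warped S W).IsSkewMonoidal := by
  have ti := SkewMonoidalData.Functorial.tH_id (S := S)
  have tc := fun {X X' X'' Y Y' Y'' : C} (f : X ⟶ X') (f' : X' ⟶ X'') (g : Y ⟶ Y')
    (g' : Y' ⟶ Y'') => SkewMonoidalData.Functorial.tH_comp (S := S) f f' g g'
  -- split a composite in the left argument
  have hL : ∀ {X X' X'' Y Y' : C} (a : X ⟶ X') (b : X' ⟶ X'') (g : Y ⟶ Y'),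
      S.tH (a ≫ b) g = S.tH a (𝟙 Y) ≫ S.tH b g := by
    intro _ _ _ Y _ a b g
    have := tc a b (𝟙 Y) g
    rwa [Category.id_comp] at this
  -- split a composite in the right argument, identities on left
  have hR : ∀ {X Y Y' Y'' : C} (a : Y ⟶ Y') (b : Y' ⟶ Y''),
      S.tH (𝟙 X) (a ≫ b) = S.tH (𝟙 X) a ≫ S.tH (𝟙 X) b := by
    intro X _ _ _ a b
    have := tc (𝟙 X) (𝟙 X) a b
    rwa [Category.id_comp] at this
  have exch : ∀ {X X' Y Y' : C} (f : X ⟶ X') (g : Y ⟶ Y'),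
      S.tH f (𝟙 Y) ≫ S.tH (𝟙 X') g = S.tH (𝟙 X) g ≫ S.tH f (𝟙 Y') := by
    intro _ _ _ _ f g
    rw [← tc, ← tc, Category.comp_id, Category.id_comp, Category.comp_id,
      Category.id_comp]
  have rea : ∀ {X Y Y' Z : C} {f : X ⟶ Y} {g : Y ⟶ Z} {p : X ⟶ Y'} {q : Y' ⟶ Z},
      f ≫ g = p ≫ q → ∀ {T : C} (w : Z ⟶ T), f ≫ g ≫ w = p ≫ q ≫ w := by
    intro _ _ _ _ f g p q h _ w
    rw [← Category.assoc, h, Category.assoc]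
  have mcomp : ∀ {X X' X'' Y Y' Y'' : C} (f : X ⟶ X') (f' : X' ⟶ X'') (g : Y ⟶ Y')
      (g' : Y' ⟶ Y'') {T : C} (w : S.t X'' Y'' ⟶ T),
      S.tH f g ≫ S.tH f' g' ≫ w = S.tH (f ≫ f') (g ≫ g') ≫ w := by
    intro _ _ _ _ _ _ f f' g g' _ w
    rw [← Category.assoc, ← tc]
  refine ⟨⟨fun X Y => ?_, fun f f' g g' => ?_⟩, ?_⟩
  · show S.tH (W.T.map (𝟙 X)) (𝟙 Y) = _
    rw [W.T.map_id, ti]; rfl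
  · show S.tH (W.T.map (f ≫ f')) (g ≫ g') = _
    rw [W.T.map_comp, tc]; rfl
  constructor
  -- a_nat
  · intro X X' Y Y' Z Z' f g h
    show S.tH (W.T.map (S.tH (W.T.map f) g)) h
        ≫ S.tH (W.v X' Y') (𝟙 Z') ≫ S.a _ _ _
      = (S.tH (W.v X Y) (𝟙 Z) ≫ S.a _ _ _)
        ≫ S.tH (W.T.map f) (S.tH (W.T.map g) h)
    calc S.tH (W.T.map (S.tH (W.T.map f) g)) h
          ≫ S.tH (W.v X' Y') (𝟙 Z') ≫ S.a _ _ _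
        = S.tH (W.T.map (S.tH (W.T.map f) g) ≫ W.v X' Y') h ≫ S.a _ _ _ := by
          rw [← Category.assoc, ← tc, Category.comp_id]
      _ = S.tH (W.v X Y ≫ S.tH (W.T.map f) (W.T.map g)) h ≫ S.a _ _ _ := by
          rw [W.v_nat]
      _ = S.tH (W.v X Y) (𝟙 Z)
          ≫ S.tH (S.tH (W.T.map f) (W.T.map g)) h ≫ S.a _ _ _ := by
          rw [hL, Category.assoc]
      _ = (S.tH (W.v X Y) (𝟙 Z) ≫ S.a _ _ _)
          ≫ S.tH (W.T.map f) (S.tH (W.T.map g) h) := by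
          rw [hS.a_nat, Category.assoc]
  -- l_nat
  · intro X Y f
    show S.tH (W.T.map (𝟙 W.K)) f ≫ S.tH W.v0 (𝟙 Y) ≫ S.l Y
      = (S.tH W.v0 (𝟙 X) ≫ S.l X) ≫ f
    rw [W.T.map_id, ← Category.assoc, ← exch, Category.assoc, hS.l_nat,
      Category.assoc]
  -- r_nat
  · intro X Y f
    exact W.k_nat f
  -- pentagon
  · intro A B Y Z
    show S.tH (W.T.map (S.tH (W.v A B) (𝟙 Y) ≫ S.a _ _ Y)) (𝟙 Z)
        ≫ (S.tH (W.v A (S.t (W.T.obj B) Y)) (𝟙 Z) ≫ S.a _ _ Z)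
        ≫ S.tH (W.T.map (𝟙 A)) (S.tH (W.v B Y) (𝟙 Z) ≫ S.a _ _ Z)
      = (S.tH (W.v (S.t (W.T.obj A) B) Y) (𝟙 Z) ≫ S.a _ _ Z)
        ≫ (S.tH (W.v A B) (𝟙 (S.t (W.T.obj Y) Z)) ≫ S.a _ _ _)
    rw [W.T.map_id, W.T.map_comp]
    simp only [Category.assoc]
    rw [hR, ← rea (hS.a_nat (𝟙 (W.T.obj A)) (W.v B Y) (𝟙 Z)),
      mcomp, mcomp]
    simp only [Category.id_comp, Category.assoc]
    rw [← hW.ax1 A B Y, hL, hL]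
    simp only [Category.assoc]
    rw [hS.pentagon, rea (hS.a_nat (W.v A B) (𝟙 (W.T.obj Y)) (𝟙 Z)), ti]
  -- ax2
  · intro X Y
    show S.tH (W.T.map (W.k X)) (𝟙 Y)
        ≫ (S.tH (W.v X W.K) (𝟙 Y) ≫ S.a _ _ Y)
        ≫ S.tH (W.T.map (𝟙 X)) (S.tH W.v0 (𝟙 Y) ≫ S.l Y) = 𝟙 _
    rw [W.T.map_id]
    simp only [Category.assoc]
    rw [hR, ← rea (hS.a_nat (𝟙 (W.T.obj X)) W.v0 (𝟙 Y)), mcomp, mcomp]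
    simp only [Category.id_comp, Category.assoc]
    rw [hW.ax2, hS.ax2]
  -- ax3
  · intro X Y
    show (S.tH (W.v W.K X) (𝟙 Y) ≫ S.a _ _ Y)
        ≫ S.tH W.v0 (𝟙 (S.t (W.T.obj X) Y)) ≫ S.l _
      = S.tH (W.T.map (S.tH W.v0 (𝟙 X) ≫ S.l X)) (𝟙 Y)
    have hn := hS.a_nat W.v0 (𝟙 (W.T.obj X)) (𝟙 Y)
    rw [ti] at hn
    simp only [Category.assoc]
    rw [← rea hn, hS.ax3, mcomp, ← tc]
    simp only [Category.id_comp, Category.comp_id, Category.assoc]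
    rw [hW.ax3, ← W.T.map_comp]
  -- ax4
  · intro X Y
    show W.k (S.t (W.T.obj X) Y) ≫ S.tH (W.v X Y) (𝟙 W.K) ≫ S.a _ _ W.K
      = S.tH (W.T.map (𝟙 X)) (W.k Y)
    rw [W.T.map_id]
    exact hW.ax4 X Y
  -- ax5
  · exact hW.ax5
end

section
/- Let C be a skew monoidal category with warping data (T, K, v, k, v₀) in which v, k, v₀, α, λ, ρ are all invertible. Then axioms 3, 4, and 5 for a warping (λ ∘ (v₀⊗1) ∘ v = Tλ ∘ T(v₀⊗1); α ∘ (v⊗1) ∘ k = 1⊗k; λ ∘ (v₀⊗1) ∘ k = 1) follow from axioms 1 (the pentagon axiom T(v) compatibility) and 2 ((1⊗v₀) ∘ v ∘ Tk = ρ). -/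
open CategoryTheory

universe w v u v' u'

/-!
Warping along `W` produces a new skew monoidal structure on `C`, with tensor `X ⊗' Y = TX ⊗ Y`,
unit `K`, associator `α ∘ (v ⊗ 1)`, left unitor `λ ∘ (v₀ ⊗ 1)` and right unitor `k`. Warping
axioms 1 and 2 are exactly the pentagon and the axiom `(1 ⊗ λ) ∘ α ∘ (ρ ⊗ 1) = 1` for this
structure, and warping axioms 4 and 5 are its axioms 4 and 5. When all structure maps are
invertible, Kelly's argument shows that the pentagon and that axiom imply the remaining three:
they make `C` a monoidal category, where those three hold as general coherence facts. Warping
axiom 3 is recovered from axiom 3 of the warped structure at `Y = I`, since `- ⊗ I` is faithful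
when `ρ` is invertible.
-/

open CategoryTheory

namespace SkewMonoidalData

variable {C : Type u} [Category.{v} C] (S : SkewMonoidalData C)

lemma tH_id_unit_injective (hS : S.IsSkewMonoidal) [∀ X, IsIso (S.r X)] {X Y : C} :
    Function.Injective (fun u : X ⟶ Y => S.tH u (𝟙 S.I)) := by
  intro u w h
  rw [← cancel_mono (S.r Y), hS.r_nat, hS.r_nat]
  exact congrArg (S.r X ≫ ·) h

variable [S.Functorial]

lemma tH_comp_id {X X' X'' : C} (f : X ⟶ X') (f' : X' ⟶ X'') (Y : C) :
    S.tH (f ≫ f') (𝟙 Y) = S.tH f (𝟙 Y) ≫ S.tH f' (𝟙 Y) := by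
  rw [← Functorial.tH_comp, Category.comp_id]

lemma tH_id_comp (X : C) {Y Y' Y'' : C} (g : Y ⟶ Y') (g' : Y' ⟶ Y'') :
    S.tH (𝟙 X) (g ≫ g') = S.tH (𝟙 X) g ≫ S.tH (𝟙 X) g' := by
  rw [← Functorial.tH_comp, Category.comp_id]

lemma tH_eq_tH_id_comp_tH_id {X X' Y Y' : C} (f : X ⟶ X') (g : Y ⟶ Y') :
    S.tH f g = S.tH f (𝟙 Y) ≫ S.tH (𝟙 X') g := by
  rw [← Functorial.tH_comp, Category.id_comp, Category.comp_id]

lemma tH_whisker_exchange {X X' Y Y' : C} (f : X ⟶ X') (g : Y ⟶ Y') :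
    S.tH (𝟙 X) g ≫ S.tH f (𝟙 Y') = S.tH f (𝟙 Y) ≫ S.tH (𝟙 X') g := by
  simp only [← Functorial.tH_comp, Category.id_comp, Category.comp_id]

instance isIso_tH {X X' Y Y' : C} (f : X ⟶ X') (g : Y ⟶ Y') [IsIso f] [IsIso g] :
    IsIso (S.tH f g) :=
  ⟨S.tH (inv f) (inv g), by simp [← Functorial.tH_comp, Functorial.tH_id],
    by simp [← Functorial.tH_comp, Functorial.tH_id]⟩

variable [∀ X Y Z, IsIso (S.a X Y Z)] [∀ X, IsIso (S.l X)] [∀ X, IsIso (S.r X)]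

/-- Mathlib's right unitor `X ⊗ I ≅ X` points the other way, so it is `ρ⁻¹`. -/
noncomputable abbrev toMonoidalCategory
    (a_nat : ∀ {X X' Y Y' Z Z' : C} (f : X ⟶ X') (g : Y ⟶ Y') (h : Z ⟶ Z'),
      S.tH (S.tH f g) h ≫ S.a X' Y' Z' = S.a X Y Z ≫ S.tH f (S.tH g h))
    (l_nat : ∀ {X Y : C} (f : X ⟶ Y), S.tH (𝟙 S.I) f ≫ S.l Y = S.l X ≫ f)
    (r_nat : ∀ {X Y : C} (f : X ⟶ Y), f ≫ S.r Y = S.r X ≫ S.tH f (𝟙 S.I))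
    (pentagon : ∀ W X Y Z : C,
      S.tH (S.a W X Y) (𝟙 Z) ≫ S.a W (S.t X Y) Z ≫ S.tH (𝟙 W) (S.a X Y Z)
        = S.a (S.t W X) Y Z ≫ S.a W X (S.t Y Z))
    (ax2 : ∀ X Y : C, S.tH (S.r X) (𝟙 Y) ≫ S.a X S.I Y ≫ S.tH (𝟙 X) (S.l Y) = 𝟙 (S.t X Y)) :
    MonoidalCategory C where
  tensorObj := S.t
  whiskerLeft X _ _ g := S.tH (𝟙 X) g
  whiskerRight f Y := S.tH f (𝟙 Y)
  tensorHom := S.tH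
  tensorUnit := S.I
  associator X Y Z := asIso (S.a X Y Z)
  leftUnitor X := asIso (S.l X)
  rightUnitor X := (asIso (S.r X)).symm
  tensorHom_def := S.tH_eq_tH_id_comp_tH_id
  id_tensorHom_id := Functorial.tH_id
  tensorHom_comp_tensorHom f₁ f₂ g₁ g₂ := (Functorial.tH_comp f₁ g₁ f₂ g₂).symm
  whiskerLeft_id := Functorial.tH_id
  id_whiskerRight := Functorial.tH_id
  associator_naturality := a_nat
  leftUnitor_naturality := l_nat
  rightUnitor_naturality f := by
    change S.tH f (𝟙 S.I) ≫ inv (S.r _) = inv (S.r _) ≫ f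
    rw [IsIso.comp_inv_eq, Category.assoc, r_nat, IsIso.inv_hom_id_assoc]
  pentagon := pentagon
  triangle X Y := by
    change S.a X S.I Y ≫ S.tH (𝟙 X) (S.l Y) = S.tH (inv (S.r X)) (𝟙 Y)
    rw [← cancel_epi (S.tH (S.r X) (𝟙 Y)), ax2, ← Functorial.tH_comp, IsIso.hom_inv_id,
      Category.id_comp, Functorial.tH_id]

theorem isSkewMonoidal_of_isIso
    (a_nat : ∀ {X X' Y Y' Z Z' : C} (f : X ⟶ X') (g : Y ⟶ Y') (h : Z ⟶ Z'),
      S.tH (S.tH f g) h ≫ S.a X' Y' Z' = S.a X Y Z ≫ S.tH f (S.tH g h))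
    (l_nat : ∀ {X Y : C} (f : X ⟶ Y), S.tH (𝟙 S.I) f ≫ S.l Y = S.l X ≫ f)
    (r_nat : ∀ {X Y : C} (f : X ⟶ Y), f ≫ S.r Y = S.r X ≫ S.tH f (𝟙 S.I))
    (pentagon : ∀ W X Y Z : C,
      S.tH (S.a W X Y) (𝟙 Z) ≫ S.a W (S.t X Y) Z ≫ S.tH (𝟙 W) (S.a X Y Z)
        = S.a (S.t W X) Y Z ≫ S.a W X (S.t Y Z))
    (ax2 : ∀ X Y : C, S.tH (S.r X) (𝟙 Y) ≫ S.a X S.I Y ≫ S.tH (𝟙 X) (S.l Y) = 𝟙 (S.t X Y)) :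
    S.IsSkewMonoidal := by
  let := S.toMonoidalCategory a_nat l_nat r_nat pentagon ax2
  refine ⟨a_nat, l_nat, r_nat, pentagon, ax2, fun X Y => ?_, fun X Y => ?_, ?_⟩
  · exact (IsIso.eq_inv_comp _).1 (MonoidalCategory.leftUnitor_tensor_hom X Y)
  · exact (IsIso.eq_comp_inv _).1 (MonoidalCategory.rightUnitor_tensor_inv X Y)
  · rw [show S.l S.I = inv (S.r S.I) from MonoidalCategory.unitors_equal (C := C), IsIso.hom_inv_id]

end SkewMonoidalData

namespace SkewWarpingData

open SkewMonoidalData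

variable {C : Type u} [Category.{v} C] {S : SkewMonoidalData C} (W : SkewWarpingData S)

def warped : SkewMonoidalData C where
  t X Y := S.t (W.T.obj X) Y
  tH f g := S.tH (W.T.map f) g
  I := W.K
  a X Y Z := S.tH (W.v X Y) (𝟙 Z) ≫ S.a (W.T.obj X) (W.T.obj Y) Z
  l X := S.tH W.v0 (𝟙 X) ≫ S.l X
  r := W.k

theorem wax4_of_isSkewMonoidal_warped (hW : W.warped.IsSkewMonoidal) : W.wax4 := by
  intro g f
  simpa only [warped, W.T.map_id, Category.assoc] using hW.ax4 g f

theorem wax5_of_isSkewMonoidal_warped (hW : W.warped.IsSkewMonoidal) : W.wax5 := by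
  simpa only [wax5, warped, Category.assoc] using hW.ax5

variable [S.Functorial]

instance : W.warped.Functorial where
  tH_id X Y := by simp only [warped, W.T.map_id, Functorial.tH_id]
  tH_comp f f' g g' := by simp only [warped, W.T.map_comp, Functorial.tH_comp]

theorem warped_a_nat (hS : S.IsSkewMonoidal) {X X' Y Y' Z Z' : C} (f : X ⟶ X') (g : Y ⟶ Y')
    (h : Z ⟶ Z') :
    W.warped.tH (W.warped.tH f g) h ≫ W.warped.a X' Y' Z'
      = W.warped.a X Y Z ≫ W.warped.tH f (W.warped.tH g h) := by
  simp only [warped, ← Category.assoc]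
  rw [← Functorial.tH_comp, Category.comp_id, W.v_nat]
  conv_lhs => rw [← Category.id_comp h, Functorial.tH_comp]
  rw [Category.assoc, hS.a_nat, Category.assoc]

theorem warped_l_nat (hS : S.IsSkewMonoidal) {X Y : C} (f : X ⟶ Y) :
    W.warped.tH (𝟙 W.warped.I) f ≫ W.warped.l Y = W.warped.l X ≫ f := by
  simp only [warped, W.T.map_id]
  rw [← Category.assoc, tH_whisker_exchange, Category.assoc, hS.l_nat, Category.assoc]

theorem warped_pentagon (hS : S.IsSkewMonoidal) (h1 : W.wax1) (P Q R E : C) :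
    W.warped.tH (W.warped.a P Q R) (𝟙 E) ≫ W.warped.a P (W.warped.t Q R) E
        ≫ W.warped.tH (𝟙 P) (W.warped.a Q R E)
      = W.warped.a (W.warped.t P Q) R E ≫ W.warped.a P Q (W.warped.t R E) := by
  have h1E := congrArg (S.tH · (𝟙 E)) (h1 P Q R)
  simp only [tH_comp_id] at h1E
  simp only [warped, W.T.map_comp, W.T.map_id, tH_comp_id, tH_id_comp, Category.assoc]
  rw [← reassoc_of% (hS.a_nat (𝟙 _) (W.v Q R) (𝟙 E)), ← reassoc_of% h1E, hS.pentagon,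
    reassoc_of% (hS.a_nat (W.v P Q) (𝟙 _) (𝟙 E)), Functorial.tH_id]

theorem warped_ax2 (hS : S.IsSkewMonoidal) (h2 : W.wax2) (X Y : C) :
    W.warped.tH (W.warped.r X) (𝟙 Y) ≫ W.warped.a X W.warped.I Y
      ≫ W.warped.tH (𝟙 X) (W.warped.l Y) = 𝟙 (W.warped.t X Y) := by
  have h2Y := congrArg (S.tH · (𝟙 Y)) (h2 X)
  simp only [tH_comp_id] at h2Y
  simp only [warped, W.T.map_id, tH_id_comp, Category.assoc]
  rw [← reassoc_of% (hS.a_nat (𝟙 _) W.v0 (𝟙 Y)), reassoc_of% h2Y, hS.ax2]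

instance [∀ g f, IsIso (W.v g f)] [∀ X Y Z, IsIso (S.a X Y Z)] (X Y Z : C) :
    IsIso (W.warped.a X Y Z) := by
  simp only [warped]; infer_instance

instance [IsIso W.v0] [∀ X, IsIso (S.l X)] (X : C) : IsIso (W.warped.l X) := by
  simp only [warped]; infer_instance

instance [∀ f, IsIso (W.k f)] (X : C) : IsIso (W.warped.r X) := by
  simp only [warped]; infer_instance

theorem isSkewMonoidal_warped (hS : S.IsSkewMonoidal) [∀ g f, IsIso (W.v g f)]
    [∀ f, IsIso (W.k f)] [IsIso W.v0] [∀ X Y Z, IsIso (S.a X Y Z)] [∀ X, IsIso (S.l X)]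
    (h1 : W.wax1) (h2 : W.wax2) : W.warped.IsSkewMonoidal :=
  W.warped.isSkewMonoidal_of_isIso (W.warped_a_nat hS) (W.warped_l_nat hS) W.k_nat
    (W.warped_pentagon hS h1) (W.warped_ax2 hS h2)

theorem wax3_of_isSkewMonoidal_warped (hS : S.IsSkewMonoidal) [∀ X, IsIso (S.r X)]
    (hW : W.warped.IsSkewMonoidal) : W.wax3 := by
  intro f
  apply S.tH_id_unit_injective hS
  have h3 := hW.ax3 f S.I
  simp only [warped, W.T.map_comp, tH_comp_id, Category.assoc] at h3
  simp only [tH_comp_id]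
  rw [← hS.ax3, reassoc_of% (hS.a_nat W.v0 (𝟙 (W.T.obj f)) (𝟙 S.I)), Functorial.tH_id]
  exact h3

end SkewWarpingData

/-- for warping data on a skew monoidal category in which `v`, `k`, `v₀`,
`α`, `λ`, `ρ` are all invertible, warping axioms 3, 4 and 5 follow from axioms 1 and 2. -/
theorem warping_redundant_axioms {C : Type u} [Category.{v} C]
    (S : SkewMonoidalData C) [S.Functorial] (hS : S.IsSkewMonoidal)
    (ia : ∀ X Y Z : C, IsIso (S.a X Y Z)) (il : ∀ X : C, IsIso (S.l X))
    (ir : ∀ X : C, IsIso (S.r X))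
    (W : SkewWarpingData S)
    (iv : ∀ g f : C, IsIso (W.v g f)) (ik : ∀ f : C, IsIso (W.k f))
    (iv0 : IsIso W.v0)
    (h1 : W.wax1) (h2 : W.wax2) :
    W.wax3 ∧ W.wax4 ∧ W.wax5 := by
  have hW : W.warped.IsSkewMonoidal := W.isSkewMonoidal_warped hS h1 h2
  exact ⟨W.wax3_of_isSkewMonoidal_warped hS hW, W.wax4_of_isSkewMonoidal_warped hW,
    W.wax5_of_isSkewMonoidal_warped hW⟩
end

section
/- Let i : A → B be a morphism in a bicategory K with a right adjoint i ⊣ i*, with unit η and counit ε. Then the hom-category K(A, B) carries a skew monoidal structure with tensor g ⊗ f = g ∘ i* ∘ f, unit i, strict associator (from strictness/associativity of composition), left unitor λ_f = ε ∘ f : i ∘ i* ∘ f → f, and right unitor ρ_f = f ∘ η : f → f ∘ i* ∘ i, satisfying all five skew monoidal axioms. -/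
open CategoryTheory

universe w v u v' u'

open Bicategory

variable {B : Type u} [Bicategory.{w, v} B] [Bicategory.Strict B]

/-- The skew monoidal structure on the hom-category `K(A, b)` induced by an adjunction
`i ⊣ i*`: tensor `g ⊗ f = g ∘ i* ∘ f`, unit `i`, strict associator, left unitor `ε f`,
right unitor `f η`. -/
def skewHom {A b : B} (i : A ⟶ b) (iStar : b ⟶ A)
    (adj : Bicategory.Adjunction i iStar) : SkewMonoidalData (A ⟶ b) where
  t g f := f ≫ iStar ≫ g
  tH {g g' f f'} φ ψ := ψ ▷ (iStar ≫ g) ≫ f' ◁ iStar ◁ φ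
  I := i
  a X Y Z := eqToHom (by simp)
  l X := X ◁ adj.counit ≫ eqToHom (by simp)
  r X := eqToHom (by simp : X = 𝟙 A ≫ X) ≫ adj.unit ▷ X ≫ eqToHom (by simp)

theorem tri1 {A b : B} (i : A ⟶ b) (iStar : b ⟶ A) (adj : Bicategory.Adjunction i iStar) :
    adj.unit ▷ i ≫ eqToHom (by simp) ≫ i ◁ adj.counit
      = eqToHom (by simp : 𝟙 A ≫ i = i ≫ 𝟙 b) := by
  have h := adj.left_triangle
  simp [leftZigzag, bicategoricalComp, Strict.associator_eqToIso, Strict.leftUnitor_eqToIso,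
    Strict.rightUnitor_eqToIso] at h
  simpa using h

theorem tri2 {A b : B} (i : A ⟶ b) (iStar : b ⟶ A) (adj : Bicategory.Adjunction i iStar) :
    iStar ◁ adj.unit ≫ eqToHom (by simp) ≫ adj.counit ▷ iStar
      = eqToHom (by simp : iStar ≫ 𝟙 A = 𝟙 b ≫ iStar) := by
  have h := adj.right_triangle
  simp [rightZigzag, bicategoricalComp, Strict.associator_eqToIso, Strict.leftUnitor_eqToIso,
    Strict.rightUnitor_eqToIso] at h
  simpa using h


attribute [local simp] Strict.associator_eqToIso Strict.leftUnitor_eqToIso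
  Strict.rightUnitor_eqToIso

/-- for an adjunction `i ⊣ i*` in a strict 2-category, the data
`(g ⊗ f = g ∘ i* ∘ f, I = i, strict associator, λ = ε f, ρ = f η)` is a skew monoidal
structure on the hom-category `K(A, b)` (functorial tensor and all five axioms). -/
theorem skewHom_isSkewMonoidal {A b : B} (i : A ⟶ b) (iStar : b ⟶ A)
    (adj : Bicategory.Adjunction i iStar) :
    (skewHom i iStar adj).Functorial ∧ (skewHom i iStar adj).IsSkewMonoidal := by
  have h1 := tri1 i iStar adj
  have h2 := tri2 i iStar adj
  constructor
  · constructor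
    · intro X Y; simp [skewHom]
    · intro X X' X'' Y Y' Y'' f f' g g'
      have e := whisker_exchange (g' ▷ iStar) f
      simp at e
      simp [skewHom, reassoc_of% e]
  · constructor
    · intro X X' Y Y' Z Z' f g h
      simp [skewHom, whisker_exchange_assoc, whisker_exchange]
    · intro X Y f
      have e := whisker_exchange f adj.counit
      simp at e
      simp [skewHom]
      rw [← reassoc_of% e]
      simp
    · intro X Y f
      have e := whisker_exchange adj.unit f
      simp at e
      rw [eqToHom_comp_iff] at e
      try simp at e
      simp [skewHom]
      rw [reassoc_of% e]
      simp
    · intro W X Y Z; simp [skewHom]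
    · intro X Y
      have e := congrArg (fun η : (iStar ≫ 𝟙 A ⟶ 𝟙 b ≫ iStar) => Y ◁ η ▷ X) h2
      simp at e
      rw [eqToHom_comp_iff] at e
      try simp at e
      simp [skewHom]
      rw [reassoc_of% e]
      simp
    · intro X Y; simp [skewHom]
    · intro X Y; simp [skewHom]
    · simp [skewHom, reassoc_of% h1]
end

section
/- Let C be a skew monoidal category. Tensoring on the right with the unit, X ↦ X ⊗ I, underlies a monad on C whose multiplication has components (1 ⊗ λ) ∘ α : (X ⊗ I) ⊗ I → X ⊗ I and whose unit has components ρ : X → X ⊗ I; the monad associativity and unit laws follow from the skew monoidal axioms. -/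
open CategoryTheory

universe w v u v' u'

/-- in a skew monoidal category, tensoring on the right with the unit,
`X ↦ X ⊗ I`, underlies a monad with multiplication `(1 ⊗ λ) ∘ α` and unit `ρ`:
the multiplication is natural and the monad unit and associativity laws hold. -/
theorem tensorUnit_monad {C : Type u} [Category.{v} C] (S : SkewMonoidalData C)
    [S.Functorial] (hS : S.IsSkewMonoidal) :
    (∀ {X Y : C} (f : X ⟶ Y),
      S.tH (S.tH f (𝟙 S.I)) (𝟙 S.I) ≫ (S.a Y S.I S.I ≫ S.tH (𝟙 Y) (S.l S.I))
        = (S.a X S.I S.I ≫ S.tH (𝟙 X) (S.l S.I)) ≫ S.tH f (𝟙 S.I)) ∧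
    (∀ {X Y : C} (f : X ⟶ Y), f ≫ S.r Y = S.r X ≫ S.tH f (𝟙 S.I)) ∧
    (∀ X : C, S.r (S.t X S.I) ≫ S.a X S.I S.I ≫ S.tH (𝟙 X) (S.l S.I) = 𝟙 (S.t X S.I)) ∧
    (∀ X : C,
      S.tH (S.r X) (𝟙 S.I) ≫ S.a X S.I S.I ≫ S.tH (𝟙 X) (S.l S.I) = 𝟙 (S.t X S.I)) ∧
    (∀ X : C,
      S.tH (S.a X S.I S.I ≫ S.tH (𝟙 X) (S.l S.I)) (𝟙 S.I)
          ≫ S.a X S.I S.I ≫ S.tH (𝟙 X) (S.l S.I)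
        = (S.a (S.t X S.I) S.I S.I ≫ S.tH (𝟙 (S.t X S.I)) (S.l S.I))
          ≫ S.a X S.I S.I ≫ S.tH (𝟙 X) (S.l S.I)) := by

  obtain ⟨tH_id, tH_comp⟩ := ‹S.Functorial›
  refine ⟨fun {X Y} f => ?_, fun {X Y} f => hS.r_nat f, fun X => ?_, fun X => hS.ax2 X S.I,
    fun X => ?_⟩
  · rw [← Category.assoc, hS.a_nat f (𝟙 S.I) (𝟙 S.I), Category.assoc, Category.assoc,
      ← tH_comp, ← tH_comp]
    simp [tH_id]
  · rw [← Category.assoc, hS.ax4, ← tH_comp, hS.ax5, Category.comp_id, tH_id]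
  · have key : S.tH (𝟙 S.I) (S.l S.I) ≫ S.l S.I = S.l (S.t S.I S.I) ≫ S.l S.I :=
      hS.l_nat (S.l S.I)
    calc S.tH (S.a X S.I S.I ≫ S.tH (𝟙 X) (S.l S.I)) (𝟙 S.I)
          ≫ S.a X S.I S.I ≫ S.tH (𝟙 X) (S.l S.I)
        = S.tH (S.a X S.I S.I) (𝟙 S.I)
            ≫ (S.tH (S.tH (𝟙 X) (S.l S.I)) (𝟙 S.I) ≫ S.a X S.I S.I)
            ≫ S.tH (𝟙 X) (S.l S.I) := by
          have h : S.tH (S.a X S.I S.I ≫ S.tH (𝟙 X) (S.l S.I)) (𝟙 S.I)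
              = S.tH (S.a X S.I S.I) (𝟙 S.I) ≫ S.tH (S.tH (𝟙 X) (S.l S.I)) (𝟙 S.I) := by
            rw [← tH_comp]; simp
          rw [h]; simp
      _ = S.tH (S.a X S.I S.I) (𝟙 S.I) ≫ S.a X (S.t S.I S.I) S.I
            ≫ S.tH (𝟙 X) (S.tH (S.l S.I) (𝟙 S.I)) ≫ S.tH (𝟙 X) (S.l S.I) := by
          rw [hS.a_nat (𝟙 X) (S.l S.I) (𝟙 S.I)]; simp
      _ = S.tH (S.a X S.I S.I) (𝟙 S.I) ≫ S.a X (S.t S.I S.I) S.I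
            ≫ S.tH (𝟙 X) (S.a S.I S.I S.I)
            ≫ S.tH (𝟙 X) (S.l (S.t S.I S.I)) ≫ S.tH (𝟙 X) (S.l S.I) := by
          rw [← tH_comp, ← tH_comp, ← tH_comp, ← hS.ax3]; simp
      _ = S.a (S.t X S.I) S.I S.I ≫ S.a X S.I (S.t S.I S.I)
            ≫ S.tH (𝟙 X) (S.l (S.t S.I S.I)) ≫ S.tH (𝟙 X) (S.l S.I) := by
          rw [← Category.assoc, ← Category.assoc, ← Category.assoc,
            Category.assoc (S.tH (S.a X S.I S.I) (𝟙 S.I)), hS.pentagon]; simp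
      _ = S.a (S.t X S.I) S.I S.I ≫ S.a X S.I (S.t S.I S.I)
            ≫ S.tH (𝟙 X) (S.tH (𝟙 S.I) (S.l S.I)) ≫ S.tH (𝟙 X) (S.l S.I) := by
          rw [← tH_comp, ← tH_comp, key]
      _ = S.a (S.t X S.I) S.I S.I
            ≫ (S.a X S.I (S.t S.I S.I) ≫ S.tH (𝟙 X) (S.tH (𝟙 S.I) (S.l S.I)))
            ≫ S.tH (𝟙 X) (S.l S.I) := by simp
      _ = S.a (S.t X S.I) S.I S.I ≫ S.tH (S.tH (𝟙 X) (𝟙 S.I)) (S.l S.I)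
            ≫ S.a X S.I S.I ≫ S.tH (𝟙 X) (S.l S.I) := by
          rw [← hS.a_nat (𝟙 X) (𝟙 S.I) (S.l S.I)]; simp
      _ = (S.a (S.t X S.I) S.I S.I ≫ S.tH (𝟙 (S.t X S.I)) (S.l S.I))
            ≫ S.a X S.I S.I ≫ S.tH (𝟙 X) (S.l S.I) := by
          rw [tH_id]; simp
end

section
/- Let C be a skew monoidal category and (X, x : X⊗I → X) a right I-module. Then the diagram (X⊗I)⊗I ⇉ X⊗I → X, with the parallel pair x⊗1 and (1⊗λ)∘α, common section ρ⊗1, and coequalizing map x : X⊗I → X, is a split coequalizer in C (split by ρ : X → X⊗I and ρ : X⊗I → (X⊗I)⊗I). -/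
open CategoryTheory

universe w v u v' u'

/-- for a right `I`-module `(X, x)` in a skew monoidal category, the
diagram `(X⊗I)⊗I ⇉ X⊗I → X`, with parallel pair `x ⊗ 1` and `(1 ⊗ λ) ∘ α`, common
section `ρ ⊗ 1`, and coequalizing map `x`, is a split coequalizer, split by
`ρ : X ⟶ X⊗I` and `ρ : X⊗I ⟶ (X⊗I)⊗I`. -/
theorem module_split_coequalizer {C : Type u} [Category.{v} C]
    (S : SkewMonoidalData C) [S.Functorial] (hS : S.IsSkewMonoidal)
    (X : C) (x : S.t X S.I ⟶ X)
    (hassoc : S.tH x (𝟙 S.I) ≫ x = S.a X S.I S.I ≫ S.tH (𝟙 X) (S.l S.I) ≫ x)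
    (hunit : S.r X ≫ x = 𝟙 X) :
    -- `x` coequalizes the pair
    (S.tH x (𝟙 S.I) ≫ x = (S.a X S.I S.I ≫ S.tH (𝟙 X) (S.l S.I)) ≫ x) ∧
    -- `ρ ⊗ 1` is a common section of the parallel pair
    (S.tH (S.r X) (𝟙 S.I) ≫ S.tH x (𝟙 S.I) = 𝟙 (S.t X S.I)) ∧
    (S.tH (S.r X) (𝟙 S.I) ≫ (S.a X S.I S.I ≫ S.tH (𝟙 X) (S.l S.I)) = 𝟙 (S.t X S.I)) ∧
    -- the splitting: `e ∘ s = 1`, `u ∘ t = 1`, `v ∘ t = s ∘ e`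
    (S.r X ≫ x = 𝟙 X) ∧
    (S.r (S.t X S.I) ≫ (S.a X S.I S.I ≫ S.tH (𝟙 X) (S.l S.I)) = 𝟙 (S.t X S.I)) ∧
    (S.r (S.t X S.I) ≫ S.tH x (𝟙 S.I) = x ≫ S.r X) := by
  obtain ⟨tH_id, tH_comp⟩ := ‹S.Functorial›
  refine ⟨by rw [hassoc, Category.assoc], ?_, hS.ax2 X S.I, hunit, ?_, (hS.r_nat x).symm⟩
  · rw [← tH_comp, hunit, Category.comp_id, tH_id]
  · rw [← Category.assoc, hS.ax4, ← tH_comp, hS.ax5, Category.id_comp, tH_id]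
end
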